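/- Let Ω ⊂ ℝ^N (N ≥ 1) be a bounded open set, let a be an admissible weight, let u̲ ≤ ū be continuous functions on the closure of Ω, let a₂ ∈ L²(Ω) be nonnegative and b₂ ≥ 0. There exists a constant C > 0, depending only on Ω, a, u̲, ū, a₂ and b₂, such that every u ∈ C²(Ω) ∩ C¹(Ω̄) with u = 0 on ∂Ω, with u̲(x) ≤ u(x) ≤ ū(x) for all x ∈ Ω̄, and satisfying the pointwise differential inequality |div(a(x,u(x)) ∇u(x))| ≤ a₂(x) + b₂ |∇u(x)|² for almost every x ∈ Ω, satisfies ∫_Ω |∇u(x)|² dx ≤ C. -/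

import Mathlib

open MeasureTheory Set
open scoped RealInnerProductSpace ENNReal

variable {N : ℕ}

/-- `u` is `C¹` on the closure of `Ω`, with `Du` a continuous extension of its gradient. -/
def IsC1OnClosure (Ω : Set (EuclideanSpace ℝ (Fin N)))
    (u : EuclideanSpace ℝ (Fin N) → ℝ)
    (Du : EuclideanSpace ℝ (Fin N) → EuclideanSpace ℝ (Fin N)) : Prop :=
  ContinuousOn u (closure Ω) ∧ (∀ x ∈ Ω, HasGradientAt u (Du x) x) ∧
    ContinuousOn Du (closure Ω)

/-- An admissible weight: smooth, bounded below by `1`, and with linear growth. -/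
def IsAdmissibleWeight (Ω : Set (EuclideanSpace ℝ (Fin N)))
    (a : EuclideanSpace ℝ (Fin N) → ℝ → ℝ) : Prop :=
  ContDiff ℝ (⊤ : ℕ∞) (fun p : EuclideanSpace ℝ (Fin N) × ℝ => a p.1 p.2) ∧
  (∀ x ∈ closure Ω, ∀ s : ℝ, 1 ≤ a x s) ∧
  (∃ a₁ b₁ : EuclideanSpace ℝ (Fin N) → ℝ,
    MemLp a₁ ∞ (volume.restrict Ω) ∧ MemLp b₁ 2 (volume.restrict Ω) ∧
    ∀ x ∈ closure Ω, ∀ s : ℝ, a x s ≤ a₁ x * |s| + b₁ x)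

/-- A smooth compactly supported test function on `Ω`. -/
def IsTestFun (Ω : Set (EuclideanSpace ℝ (Fin N)))
    (v : EuclideanSpace ℝ (Fin N) → ℝ) : Prop :=
  ContDiff ℝ (⊤ : ℕ∞) v ∧ HasCompactSupport v ∧ tsupport v ⊆ Ω

/-- The divergence of a vector field on `ℝ^N`. -/
noncomputable def vdiv (F : EuclideanSpace ℝ (Fin N) → EuclideanSpace ℝ (Fin N))
    (x : EuclideanSpace ℝ (Fin N)) : ℝ :=
  ∑ i, fderiv ℝ F x (EuclideanSpace.single i 1) i

open Metric Filter
set_option maxHeartbeats 1000000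

lemma expNegInvGlue_monotone : Monotone expNegInvGlue := by
  intro x y hxy
  rcases le_or_gt x 0 with hx | hx
  · rw [expNegInvGlue.zero_of_nonpos hx]
    exact expNegInvGlue.nonneg y
  · have hy : 0 < y := hx.trans_le hxy
    unfold _root_.expNegInvGlue
    rw [if_neg (not_le.2 hx), if_neg (not_le.2 hy)]
    apply Real.exp_le_exp.2
    simp only [neg_le_neg_iff]
    exact one_div x ▸ one_div y ▸ one_div_le_one_div_of_le hx hxy

lemma smoothTransition_monotone : Monotone Real.smoothTransition := by
  intro x y hxy
  unfold Real.smoothTransition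
  rw [div_le_div_iff₀ (Real.smoothTransition.pos_denom x) (Real.smoothTransition.pos_denom y)]
  have h1 := expNegInvGlue_monotone hxy
  have h2 := expNegInvGlue_monotone (by linarith : 1 - y ≤ 1 - x)
  nlinarith [expNegInvGlue.nonneg x, expNegInvGlue.nonneg y,
    expNegInvGlue.nonneg (1-x), expNegInvGlue.nonneg (1-y)]

lemma monotone_deriv_nonneg {f : ℝ → ℝ} (hf : Monotone f) (hd : DifferentiableAt ℝ f t) :
    0 ≤ deriv f t := by
  have h := hd.hasDerivAt
  rw [hasDerivAt_iff_tendsto_slope] at h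
  have h' : Filter.Tendsto (slope f t) (nhdsWithin t (Set.Ioi t)) (nhds (deriv f t)) :=
    h.mono_left (nhdsWithin_mono t (by intro y hy; exact ne_of_gt hy))
  refine ge_of_tendsto h' ?_
  filter_upwards [self_mem_nhdsWithin] with y hy
  have : t < y := hy
  rw [slope_def_field]
  exact div_nonneg (by linarith [hf this.le]) (by linarith)

lemma deriv_smoothTransition_nonneg (t : ℝ) : 0 ≤ deriv Real.smoothTransition t :=
  monotone_deriv_nonneg smoothTransition_monotone
    ((Real.smoothTransition.contDiff (n := 1)).differentiable (by norm_num) t)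

noncomputable def psi (l ε s : ℝ) : ℝ :=
  (Real.sinh (l*s) / l) * Real.smoothTransition ((s^2 - ε^2)/ε^2)

noncomputable def psid (l ε s : ℝ) : ℝ :=
  Real.cosh (l*s) * Real.smoothTransition ((s^2 - ε^2)/ε^2)
    + (Real.sinh (l*s) / l) * (deriv Real.smoothTransition ((s^2 - ε^2)/ε^2) * (2*s/ε^2))

lemma hasDerivAt_psi {l ε : ℝ} (hl : l ≠ 0) (hε : ε ≠ 0) (s : ℝ) :
    HasDerivAt (psi l ε) (psid l ε s) s := by
  have h1 : HasDerivAt (fun s => Real.sinh (l*s) / l) (Real.cosh (l*s)) s := by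
    have := ((Real.hasDerivAt_sinh (l*s)).comp s ((hasDerivAt_id s).const_mul l))
    simpa [mul_comm, mul_div_assoc, mul_div_cancel_left₀ _ hl] using this.div_const l
  have h2 : HasDerivAt (fun s : ℝ => (s^2 - ε^2)/ε^2) (2*s/ε^2) s := by
    have : HasDerivAt (fun s : ℝ => s^2 - ε^2) (2*s) s := by
      simpa using ((hasDerivAt_pow 2 s).sub_const (ε^2))
    simpa using this.div_const (ε^2)
  have h3 : HasDerivAt (fun s : ℝ => Real.smoothTransition ((s^2 - ε^2)/ε^2))
      (deriv Real.smoothTransition ((s^2 - ε^2)/ε^2) * (2*s/ε^2)) s := by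
    exact (((Real.smoothTransition.contDiff (n := 1)).differentiable (by norm_num)
      _).hasDerivAt).comp s h2
  exact h1.mul h3

lemma psi_eq_zero {l ε s : ℝ} (h : s^2 ≤ ε^2) : psi l ε s = 0 := by
  unfold psi
  rw [Real.smoothTransition.zero_of_nonpos
    (div_nonpos_of_nonpos_of_nonneg (by linarith) (by positivity)), mul_zero]

lemma trans_one {ε s : ℝ} (hε : ε ≠ 0) (h : 2*ε^2 ≤ s^2) :
    Real.smoothTransition ((s^2 - ε^2)/ε^2) = 1 := by
  apply Real.smoothTransition.one_of_one_le
  rw [le_div_iff₀ (by positivity)]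
  linarith

lemma abs_psi_le {l ε : ℝ} (hl : 0 < l) (s : ℝ) : |psi l ε s| ≤ Real.sinh (l*|s|) / l := by
  unfold psi
  rw [abs_mul, abs_div, abs_of_pos hl]
  calc |Real.sinh (l*s)| / l * |Real.smoothTransition ((s^2 - ε^2)/ε^2)|
      ≤ |Real.sinh (l*s)| / l * 1 := by
        apply mul_le_mul_of_nonneg_left _ (by positivity)
        rw [abs_of_nonneg (Real.smoothTransition.nonneg _)]
        exact Real.smoothTransition.le_one _
    _ = Real.sinh (l*|s|) / l := by
        rw [mul_one, Real.abs_sinh, abs_mul, abs_of_pos hl]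

lemma abs_sinh_le_cosh (x : ℝ) : |Real.sinh x| ≤ Real.cosh x := by
  rw [abs_le]
  constructor
  · nlinarith [Real.cosh_add_sinh x, Real.exp_pos x]
  · nlinarith [Real.cosh_sub_sinh x, Real.exp_pos (-x)]

lemma key_lower {l ε b₂ A s : ℝ} (hl : 0 < l) (hε : ε ≠ 0) (hb₂ : 0 ≤ b₂)
    (hbl : 2*b₂ ≤ l) (hA : 1 ≤ A) :
    (1/2) * Real.smoothTransition ((s^2 - ε^2)/ε^2) + b₂ * |psi l ε s|
      ≤ A * psid l ε s := by
  set χ := Real.smoothTransition ((s^2 - ε^2)/ε^2) with hχ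
  have hχ0 : 0 ≤ χ := Real.smoothTransition.nonneg _
  have hχ1 : χ ≤ 1 := Real.smoothTransition.le_one _
  have hcosh : 1 ≤ Real.cosh (l*s) := Real.one_le_cosh _
  have hsc : |Real.sinh (l*s)| ≤ Real.cosh (l*s) := abs_sinh_le_cosh _
  -- second term of psid is nonneg
  have hterm2 : 0 ≤ (Real.sinh (l*s) / l) * (deriv Real.smoothTransition ((s^2 - ε^2)/ε^2) * (2*s/ε^2)) := by
    have hd := deriv_smoothTransition_nonneg ((s^2 - ε^2)/ε^2)
    rcases le_or_gt 0 s with hs | hs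
    · have h1 : 0 ≤ Real.sinh (l*s) := Real.sinh_nonneg_iff.2 (by positivity)
      positivity
    · have h1 : Real.sinh (l*s) ≤ 0 := Real.sinh_nonpos_iff.2 (by nlinarith)
      have h2 : 2*s/ε^2 ≤ 0 := by
        apply div_nonpos_of_nonpos_of_nonneg (by linarith) (by positivity)
      have := mul_nonneg hd (neg_nonneg.2 h2)
      have := mul_nonneg (neg_nonneg.2 (div_nonpos_of_nonpos_of_nonneg h1 hl.le)) this
      nlinarith
  have hpsid_ge : Real.cosh (l*s) * χ ≤ psid l ε s := by
    unfold psid; rw [← hχ]; linarith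
  have hpsid0 : 0 ≤ psid l ε s := le_trans (by positivity) hpsid_ge
  have habs : b₂ * |psi l ε s| ≤ (1/2) * Real.cosh (l*s) * χ := by
    have : |psi l ε s| = (|Real.sinh (l*s)| / l) * χ := by
      unfold psi; rw [← hχ, abs_mul, abs_div, abs_of_pos hl, abs_of_nonneg hχ0]
    rw [this]
    have h1 : b₂ * ((|Real.sinh (l*s)| / l) * χ) ≤ (l/2) * ((Real.cosh (l*s) / l) * χ) := by
      apply mul_le_mul (by linarith) _ (by positivity) (by linarith)
      exact mul_le_mul_of_nonneg_right (by gcongr) hχ0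
    calc b₂ * ((|Real.sinh (l*s)| / l) * χ) ≤ (l/2) * ((Real.cosh (l*s) / l) * χ) := h1
      _ = (1/2) * Real.cosh (l*s) * χ := by field_simp
  have hAp : psid l ε s ≤ A * psid l ε s := le_mul_of_one_le_left hpsid0 hA
  have : (1/2) * χ + (1/2) * Real.cosh (l*s) * χ ≤ Real.cosh (l*s) * χ := by nlinarith
  linarith

lemma deriv_smoothTransition_of_neg {t : ℝ} (ht : t < 0) :
    deriv Real.smoothTransition t = 0 := by
  have hev : Real.smoothTransition =ᶠ[nhds t] (fun _ => (0:ℝ)) :=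
    Filter.eventually_of_mem (Iio_mem_nhds ht)
      (fun y hy => Real.smoothTransition.zero_of_nonpos (le_of_lt hy))
  rw [hev.deriv_eq]
  exact deriv_const t 0

lemma psid_eq_zero {l ε s : ℝ} (hε : ε ≠ 0) (h : s^2 < ε^2) : psid l ε s = 0 := by
  have harg : (s^2 - ε^2)/ε^2 < 0 := div_neg_of_neg_of_pos (by linarith) (by positivity)
  unfold psid
  rw [Real.smoothTransition.zero_of_nonpos harg.le, deriv_smoothTransition_of_neg harg]
  ring

lemma psid_continuous (l ε : ℝ) : Continuous (psid l ε) := by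
  have h1 : Continuous (fun s : ℝ => (s^2 - ε^2)/ε^2) :=
    (((continuous_pow 2).sub continuous_const).div_const _)
  have h2 : Continuous (deriv Real.smoothTransition) :=
    (Real.smoothTransition.contDiff (n := 2)).continuous_deriv (by norm_num)
  unfold psid
  exact ((Real.continuous_cosh.comp (continuous_const.mul continuous_id)).mul
      (Real.smoothTransition.continuous.comp h1)).add
    (((Real.continuous_sinh.comp (continuous_const.mul continuous_id)).div_const _).mul
      ((h2.comp h1).mul ((continuous_const.mul continuous_id).div_const _)))

variable {N : ℕ}

local notation "E" => EuclideanSpace ℝ (Fin N)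

lemma not_density_point {u : E → ℝ} {Du : E → E}
    {x : E} (hgrad : HasGradientAt u (Du x) x) (hux : u x = 0)
    (hDux : Du x ≠ 0) {A : Set E} (hA : ∀ y ∈ A, u y = 0) :
    ¬ Filter.Tendsto (fun r => volume (A ∩ closedBall x r) / volume (closedBall x r))
      (nhdsWithin 0 (Set.Ioi 0)) (nhds 1) := by
  intro htend
  set c := ‖Du x‖ with hc
  have hc0 : 0 < c := norm_pos_iff.2 hDux
  set e : E := c⁻¹ • Du x with he
  have hDue : ⟪Du x, e⟫ = c := by
    rw [he, real_inner_smul_right, real_inner_self_eq_norm_mul_norm]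
    field_simp
    rw [hc]
  have hne : ‖e‖ = 1 := by
    rw [he, norm_smul, norm_inv, Real.norm_eq_abs, abs_of_pos hc0]
    field_simp
    rw [hc]
  -- little-o estimate
  have hlo := (hasFDerivAt_iff_isLittleO_nhds_zero.1 hgrad.hasFDerivAt)
  have hev : ∀ᶠ h : E in nhds 0, ‖u (x + h) - u x - ⟪Du x, h⟫‖ ≤ (c/8) * ‖h‖ := by
    have := hlo.def (by positivity : (0:ℝ) < c/8)
    filter_upwards [this] with h hh
    simpa [InnerProductSpace.toDual_apply_apply] using hh
  rw [Metric.eventually_nhds_iff] at hev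
  obtain ⟨r₀, hr₀, hball⟩ := hev
  -- key geometric claim
  have hkey : ∀ r : ℝ, 0 < r → r < r₀ →
      A ∩ closedBall x r ⊆ closedBall x r \ closedBall (x + (r/2) • e) (r/4) := by
    intro r hr hrr₀ y hy
    refine ⟨hy.2, fun hyB => ?_⟩
    rw [mem_closedBall, dist_eq_norm] at hyB
    have hyx : ‖y - x‖ ≤ 3*r/4 := by
      have : y - x = (y - (x + (r/2) • e)) + (r/2) • e := by abel
      rw [this]
      calc ‖(y - (x + (r/2) • e)) + (r/2) • e‖
          ≤ ‖y - (x + (r/2) • e)‖ + ‖(r/2) • e‖ := norm_add_le _ _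
        _ ≤ r/4 + r/2 := by
            refine add_le_add hyB ?_
            rw [norm_smul, hne, mul_one, Real.norm_eq_abs, abs_of_pos (by linarith)]
        _ = 3*r/4 := by ring
    have hinner : c*r/4 ≤ ⟪Du x, y - x⟫ := by
      have hsplit : (y : E) - x = (r/2) • e + (y - (x + (r/2) • e)) := by abel
      rw [hsplit, inner_add_right, real_inner_smul_right, hDue]
      have habs : |⟪Du x, y - (x + (r/2) • e)⟫| ≤ c * (r/4) := by
        calc |⟪Du x, y - (x + (r/2) • e)⟫| ≤ ‖Du x‖ * ‖y - (x + (r/2) • e)‖ :=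
              abs_real_inner_le_norm _ _
          _ ≤ c * (r/4) := by rw [← hc]; exact mul_le_mul_of_nonneg_left hyB hc0.le
      have := (abs_le.1 habs).1
      nlinarith
    have hbnd : ‖u (x + (y - x)) - u x - ⟪Du x, y - x⟫‖ ≤ (c/8) * ‖y - x‖ := by
      apply hball
      rw [dist_eq_norm, sub_zero]
      linarith [hyx]
    rw [add_sub_cancel, hux, sub_zero, Real.norm_eq_abs] at hbnd
    have huy : u y = 0 := hA y hy.1
    rw [huy] at hbnd
    have h8 : (c/8) * ‖y - x‖ ≤ (c/8) * (3*r/4) :=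
      mul_le_mul_of_nonneg_left hyx (by positivity)
    have := (abs_le.1 (hbnd.trans h8)).1
    nlinarith
  -- measure estimate
  set n := Module.finrank ℝ E with hn
  set V := volume (ball (0:E) 1) with hV
  have hV0 : V ≠ 0 := (measure_ball_pos volume (0:E) one_pos).ne'
  have hVtop : V ≠ ⊤ := measure_ball_lt_top.ne
  set θ : ℝ≥0∞ := ENNReal.ofReal ((4:ℝ)⁻¹ ^ n) with hθ
  have hθ0 : θ ≠ 0 := by
    rw [hθ]
    simp only [ne_eq, ENNReal.ofReal_eq_zero, not_le]
    positivity
  have hθtop : θ ≠ ⊤ := ENNReal.ofReal_ne_top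
  have hratio : ∀ r : ℝ, 0 < r → r < r₀ →
      volume (A ∩ closedBall x r) / volume (closedBall x r) ≤ 1 - θ := by
    intro r hr hrr₀
    set cB := closedBall x r
    set B' := closedBall (x + (r/2) • e) (r/4)
    have hcB : volume cB = ENNReal.ofReal (r ^ n) * V :=
      Measure.addHaar_closedBall volume x hr.le
    have hB' : volume B' = θ * volume cB := by
      rw [Measure.addHaar_closedBall volume _ (by positivity : (0:ℝ) ≤ r/4), hcB]
      rw [← mul_assoc, ← ENNReal.ofReal_mul (by positivity)]
      congr 2
      rw [div_pow, inv_pow]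
      ring
    have hcB0 : volume cB ≠ 0 := by
      rw [hcB]
      exact mul_ne_zero_iff.2 ⟨by simp [ENNReal.ofReal_eq_zero, not_le]; positivity, hV0⟩
    have hcBtop : volume cB ≠ ⊤ := measure_closedBall_lt_top.ne
    have hsub : B' ⊆ cB := by
      intro z hz
      rw [mem_closedBall] at hz ⊢
      calc dist z x ≤ dist z (x + (r/2) • e) + dist (x + (r/2) • e) x := dist_triangle _ _ _
        _ ≤ r/4 + r/2 := by
            refine add_le_add hz ?_
            rw [dist_eq_norm, add_sub_cancel_left, norm_smul, hne, mul_one,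
              Real.norm_eq_abs, abs_of_pos (by linarith)]
        _ ≤ r := by linarith
    have hAcB : volume (A ∩ cB) + volume B' ≤ volume cB := by
      have h1 : volume (A ∩ cB) ≤ volume (cB \ B') := measure_mono (hkey r hr hrr₀)
      have h2 : volume (cB \ B') = volume cB - volume B' :=
        measure_diff hsub measurableSet_closedBall.nullMeasurableSet
          (measure_closedBall_lt_top.ne)
      have h3 : volume B' ≤ volume cB := measure_mono hsub
      calc volume (A ∩ cB) + volume B' ≤ (volume cB - volume B') + volume B' := by
            exact add_le_add_left (h1.trans h2.le) _
        _ = volume cB := tsub_add_cancel_of_le h3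
    have hdiv : volume (A ∩ cB) / volume cB + θ ≤ 1 := by
      have : volume (A ∩ cB) / volume cB + volume B' / volume cB ≤ 1 := by
        rw [ENNReal.div_add_div_same]
        exact ENNReal.div_le_of_le_mul (by rwa [one_mul])
      rw [hB'] at this
      rwa [mul_div_assoc, ENNReal.div_self hcB0 hcBtop, mul_one] at this
    exact ENNReal.le_sub_of_add_le_right hθtop hdiv
  -- contradiction with tendsto 1
  have hlt : (1:ℝ≥0∞) - θ/2 < 1 := ENNReal.sub_lt_self ENNReal.one_ne_top one_ne_zero
    (by simp [ENNReal.div_eq_zero_iff, hθ0, hθtop])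
  have hev2 := htend.eventually (eventually_gt_nhds hlt)
  have hev3 : ∀ᶠ r in nhdsWithin (0:ℝ) (Set.Ioi 0), r < r₀ :=
    ((eventually_lt_nhds hr₀).filter_mono nhdsWithin_le_nhds)
  obtain ⟨r, hr1, hr2, hr3⟩ := (hev2.and (hev3.and eventually_mem_nhdsWithin)).exists
  have h4 := hratio r hr3 hr2
  have h5 : (1:ℝ≥0∞) - θ ≤ 1 - θ/2 := tsub_le_tsub_left (ENNReal.half_le_self) 1
  exact absurd (hr1.trans_le (h4.trans h5)) (lt_irrefl _)

lemma grad_ae_zero {Ω : Set E} (hΩ : IsOpen Ω) {u : E → ℝ} {Du : E → E}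
    (hu : ∀ x ∈ Ω, HasGradientAt u (Du x) x) (hc : ContinuousOn u Ω) :
    ∀ᵐ x ∂(volume.restrict Ω), u x = 0 → Du x = 0 := by
  set A : Set E := Ω ∩ u ⁻¹' {0} with hA
  have hAsub : ∀ y ∈ A, u y = 0 := fun y hy => hy.2
  have hAmeas : MeasurableSet A := by
    have hopen : IsOpen (Ω ∩ u ⁻¹' ({0}ᶜ)) :=
      hc.isOpen_inter_preimage hΩ isOpen_compl_singleton
    have : A = Ω \ (Ω ∩ u ⁻¹' ({0}ᶜ)) := by
      ext y
      simp only [hA, Set.mem_inter_iff, Set.mem_preimage, Set.mem_singleton_iff,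
        Set.mem_diff, Set.mem_compl_iff]
      tauto
    rw [this]
    exact hΩ.measurableSet.diff hopen.measurableSet
  have hbes := Besicovitch.ae_tendsto_measure_inter_div volume A
  set B : Set E := {x | x ∈ A ∧ Du x ≠ 0} with hB
  have hBnull : volume B = 0 := by
    have hsub : B ⊆ {x | ¬ Filter.Tendsto
        (fun r => volume (A ∩ closedBall x r) / volume (closedBall x r))
        (nhdsWithin 0 (Set.Ioi 0)) (nhds 1)} := by
      intro x hx
      exact not_density_point (hu x hx.1.1) hx.1.2 hx.2 hAsub
    have h0 : volume.restrict A {x | ¬ Filter.Tendsto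
        (fun r => volume (A ∩ closedBall x r) / volume (closedBall x r))
        (nhdsWithin 0 (Set.Ioi 0)) (nhds 1)} = 0 := hbes
    have h1 : volume.restrict A B = 0 := le_antisymm (h0 ▸ measure_mono hsub) zero_le
    have h2 : volume.restrict A B = volume (B ∩ A) := Measure.restrict_apply' hAmeas
    have h3 : B ∩ A = B := Set.inter_eq_left.2 (fun x hx => hx.1)
    rw [h2, h3] at h1
    exact h1
  rw [MeasureTheory.ae_iff]
  have h4 : {x | ¬(u x = 0 → Du x = 0)} ∩ Ω = B := by
    ext y
    simp only [Set.mem_inter_iff, Set.mem_setOf_eq, hB, hA, Set.mem_preimage,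
      Set.mem_singleton_iff, Classical.not_imp]
    tauto
  calc volume.restrict Ω {x | ¬(u x = 0 → Du x = 0)}
      = volume ({x | ¬(u x = 0 → Du x = 0)} ∩ Ω) := Measure.restrict_apply' hΩ.measurableSet
    _ = volume B := by rw [h4]
    _ = 0 := hBnull

/-- Remark 3.3: `H¹` a priori bound for classical solutions of the pointwise
differential inequality `|div(a(x,u)∇u)| ≤ a₂ + b₂|∇u|²`. -/
theorem h1_bound_pointwise_inequality
    (hN : 1 ≤ N) (Ω : Set (EuclideanSpace ℝ (Fin N)))
    (hΩ : IsOpen Ω) (hΩb : Bornology.IsBounded Ω)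
    (a : EuclideanSpace ℝ (Fin N) → ℝ → ℝ) (ha : IsAdmissibleWeight Ω a)
    (ul uu : EuclideanSpace ℝ (Fin N) → ℝ)
    (hulc : ContinuousOn ul (closure Ω)) (huuc : ContinuousOn uu (closure Ω))
    (hord : ∀ x ∈ closure Ω, ul x ≤ uu x)
    (a₂ : EuclideanSpace ℝ (Fin N) → ℝ) (ha₂ : MemLp a₂ 2 (volume.restrict Ω))
    (ha₂pos : ∀ x, 0 ≤ a₂ x) (b₂ : ℝ) (hb₂ : 0 ≤ b₂) :
    ∃ C > 0, ∀ (u : EuclideanSpace ℝ (Fin N) → ℝ)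
      (Du : EuclideanSpace ℝ (Fin N) → EuclideanSpace ℝ (Fin N)),
      IsC1OnClosure Ω u Du →
      ContDiffOn ℝ 2 u Ω →
      (∀ x ∈ frontier Ω, u x = 0) →
      (∀ x ∈ closure Ω, ul x ≤ u x ∧ u x ≤ uu x) →
      (∀ᵐ x ∂(volume.restrict Ω),
        |vdiv (fun y => a y (u y) • Du y) x| ≤ a₂ x + b₂ * ‖Du x‖ ^ 2) →
      ∫ x in Ω, ‖Du x‖ ^ 2 ≤ C := by
  classical
  obtain ⟨hasm, hage1, -⟩ := ha
  rcases Set.eq_empty_or_nonempty (closure Ω) with hKe | hKne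
  · refine ⟨1, one_pos, ?_⟩
    intro u Du _ _ _ _ _
    have hΩe : Ω = ∅ := eq_empty_of_subset_empty (hKe ▸ subset_closure)
    rw [hΩe]
    simp
  have hK : IsCompact (closure Ω) := hΩb.isCompact_closure
  -- the uniform bound M on |u|
  have hcontM : ContinuousOn (fun x => max |ul x| |uu x|) (closure Ω) := fun x hx =>
    ((hulc x hx).abs.max (huuc x hx).abs)
  obtain ⟨z, hzK, hzmax⟩ := hK.exists_isMaxOn hKne hcontM
  set M := max |ul z| |uu z| with hMdef
  have hM0 : (0:ℝ) ≤ M := le_trans (abs_nonneg _) (le_max_left _ _)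
  set l := 2*b₂ + 1 with hldef
  have hl0 : 0 < l := by simp only [hldef]; linarith
  haveI : IsFiniteMeasure (volume.restrict Ω) :=
    ⟨by rw [Measure.restrict_apply_univ]; exact hΩb.measure_lt_top⟩
  have ha₂int : Integrable a₂ (volume.restrict Ω) :=
    (ha₂.mono_exponent (by norm_num : (1:ℝ≥0∞) ≤ 2)).integrable le_rfl
  set A₂ := ∫ x in Ω, a₂ x with hA₂def
  have hA₂0 : 0 ≤ A₂ := integral_nonneg (fun x => ha₂pos x)
  set smax := Real.sinh (l*M)/l with hsmaxdef
  have hsmax0 : 0 ≤ smax := div_nonneg (Real.sinh_nonneg_iff.2 (by positivity)) hl0.le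
  refine ⟨2*smax*A₂ + 1, by positivity, ?_⟩
  intro u Du hC1 hu2 hbdry hrange hae
  obtain ⟨hucl, hgrad, hDucl⟩ := hC1
  have hmuΩ : MeasurableSet Ω := hΩ.measurableSet
  -- |u| ≤ M on the closure
  have hub : ∀ x ∈ closure Ω, |u x| ≤ M := by
    intro x hx
    obtain ⟨h1, h2⟩ := hrange x hx
    have h3 : max |ul x| |uu x| ≤ max |ul z| |uu z| := hzmax hx
    have h4 : |ul x| ≤ M := le_trans (le_max_left _ _) h3
    have h5 : |uu x| ≤ M := le_trans (le_max_right _ _) h3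
    rw [abs_le] at h4 h5 ⊢
    exact ⟨by linarith [h4.1], by linarith [h5.2]⟩
  -- bound on ‖Du‖
  obtain ⟨zD, -, hzD⟩ := hK.exists_isMaxOn hKne hDucl.norm
  set Dm := ‖Du zD‖ with hDmdef
  have hDm : ∀ x ∈ closure Ω, ‖Du x‖ ≤ Dm := fun x hx => hzD hx
  have hDm0 : 0 ≤ Dm := norm_nonneg _
  -- basic integrability
  have hDusq_cont : ContinuousOn (fun x => ‖Du x‖^2) Ω :=
    ((hDucl.mono subset_closure).norm).pow 2
  have hDusq_aesm : AEStronglyMeasurable (fun x => ‖Du x‖^2) (volume.restrict Ω) :=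
    hDusq_cont.aestronglyMeasurable hmuΩ
  have hDusq_int : Integrable (fun x => ‖Du x‖^2) (volume.restrict Ω) := by
    refine Integrable.mono' (integrable_const (Dm^2)) hDusq_aesm ?_
    filter_upwards [ae_restrict_mem hmuΩ] with x hx
    rw [Real.norm_eq_abs, abs_of_nonneg (by positivity)]
    have := hDm x (subset_closure hx)
    nlinarith [norm_nonneg (Du x)]
  -- the ε-truncated estimate
  have hεest : ∀ ε : ℝ, 0 < ε →
      ∫ x in Ω, ({y | y ∈ Ω ∧ 2*ε^2 < (u y)^2}).indicator (fun y => ‖Du y‖^2) x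
        ≤ 2*smax*A₂ := by
    intro ε hε
    -- smooth truncation ψ = psi l ε
    have hder : ∀ s, HasDerivAt (psi l ε) (psid l ε s) s := hasDerivAt_psi hl0.ne' hε.ne'
    have hψdiff : Differentiable ℝ (psi l ε) := fun s => (hder s).differentiableAt
    have hψC1 : ContDiff ℝ 1 (psi l ε) := by
      rw [contDiff_one_iff_deriv]
      refine ⟨hψdiff, ?_⟩
      have hd : deriv (psi l ε) = psid l ε := funext fun s => (hder s).deriv
      rw [hd]; exact psid_continuous l ε
    -- the compact set S where the test function lives
    set S : Set (EuclideanSpace ℝ (Fin N)) :=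
      closure Ω ∩ (fun x => |u x|) ⁻¹' Set.Ici ε with hSdef
    have hScl : IsClosed S :=
      (hucl.abs).preimage_isClosed_of_isClosed isClosed_closure isClosed_Ici
    have hScomp : IsCompact S := hK.of_isClosed_subset hScl Set.inter_subset_left
    have hSΩ : S ⊆ Ω := by
      rintro x ⟨hxK, hxε⟩
      by_contra hxΩ
      have hxf : x ∈ frontier Ω := by
        rw [hΩ.frontier_eq]; exact ⟨hxK, hxΩ⟩
      have h0 := hbdry x hxf
      have h1 : ε ≤ |u x| := hxε
      rw [h0] at h1; simp at h1; linarith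
    -- C¹ structure on Ω
    have hDu_eq : ∀ y ∈ Ω, Du y = (InnerProductSpace.toDual ℝ
        (EuclideanSpace ℝ (Fin N))).symm (fderiv ℝ u y) := by
      intro y hy
      have h := hasGradientAt_iff_hasFDerivAt.1 (hgrad y hy)
      rw [h.fderiv]
      simp
    have hfderiv_cd : ContDiffOn ℝ 1 (fun y => fderiv ℝ u y) Ω :=
      ((contDiffOn_succ_iff_fderiv_of_isOpen hΩ (n := 1)).1 (by exact_mod_cast hu2)).2.2
    have hDuC1 : ContDiffOn ℝ 1 Du Ω := by
      refine ContDiffOn.congr ?_ hDu_eq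
      exact (InnerProductSpace.toDual ℝ
        (EuclideanSpace ℝ (Fin N))).symm.contDiff.comp_contDiffOn hfderiv_cd
    have huC1 : ContDiffOn ℝ 1 u Ω := hu2.of_le (by norm_num)
    have haC1 : ContDiffOn ℝ 1 (fun y => a y (u y)) Ω := by
      have hpair : ContDiffOn ℝ 1 (fun y => (y, u y)) Ω := (contDiffOn_id).prodMk huC1
      exact (hasm.of_le (by simp)).comp_contDiffOn hpair
    set F := fun y => a y (u y) • Du y with hFdef
    have hFC1 : ContDiffOn ℝ 1 F Ω := haC1.smul hDuC1
    set G := fun y => psi l ε (u y) • F y with hGdef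
    have hGC1 : ContDiffOn ℝ 1 G Ω := (hψC1.comp_contDiffOn huC1).smul hFC1
    set w := Ω.indicator G with hwdef
    have hwG : ∀ y ∈ Ω, w y = G y := fun y hy => Set.indicator_of_mem hy G
    have hw0 : ∀ y ∉ S, w y = 0 := by
      intro y hy
      by_cases hyΩ : y ∈ Ω
      · rw [hwG y hyΩ]
        have hyε : ¬ ε ≤ |u y| := fun h => hy ⟨subset_closure hyΩ, h⟩
        have : psi l ε (u y) = 0 := psi_eq_zero (by nlinarith [abs_nonneg (u y), sq_abs (u y)])
        rw [hGdef]
        simp [this]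
      · exact Set.indicator_of_notMem hyΩ G
    have hwev : ∀ x ∈ Ω, w =ᶠ[nhds x] G :=
      fun x hx => Filter.eventually_of_mem (hΩ.mem_nhds hx) hwG
    have hw0ev : ∀ x ∉ S, w =ᶠ[nhds x] (fun _ => (0 : EuclideanSpace ℝ (Fin N))) :=
      fun x hx => Filter.eventually_of_mem (hScl.isOpen_compl.mem_nhds hx)
        (fun y hy => hw0 y hy)
    have hGdiff : ∀ x ∈ Ω, DifferentiableAt ℝ G x := fun x hx =>
      (hGC1.differentiableOn (by norm_num)).differentiableAt (hΩ.mem_nhds hx)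
    have hwdiff : Differentiable ℝ w := by
      intro x
      by_cases hx : x ∈ Ω
      · exact ((hwev x hx).differentiableAt_iff).2 (hGdiff x hx)
      · have hxS : x ∉ S := fun h => hx (hSΩ h)
        exact ((hw0ev x hxS).differentiableAt_iff).2 (differentiableAt_const 0)
    have hwfd_eq : ∀ x ∈ Ω, fderiv ℝ w x = fderiv ℝ G x :=
      fun x hx => (hwev x hx).fderiv_eq
    have hwfd0 : ∀ x ∉ S, fderiv ℝ w x = 0 := by
      intro x hx
      rw [(hw0ev x hx).fderiv_eq]
      exact fderiv_const_apply 0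
    have hwcont : Continuous w := hwdiff.continuous
    have hfdGcont : ContinuousOn (fun x => fderiv ℝ G x) Ω :=
      hGC1.continuousOn_fderiv_of_isOpen hΩ le_rfl
    have hfdwcont : Continuous (fun x => fderiv ℝ w x) := by
      rw [continuous_iff_continuousAt]
      intro x
      by_cases hx : x ∈ Ω
      · have h1 : (fun x => fderiv ℝ w x) =ᶠ[nhds x] (fun x => fderiv ℝ G x) :=
          Filter.eventually_of_mem (hΩ.mem_nhds hx) (fun y hy => hwfd_eq y hy)
        exact ((hfdGcont.continuousAt (hΩ.mem_nhds hx)).congr h1.symm)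
      · have hxS : x ∉ S := fun h => hx (hSΩ h)
        have h1 : (fun x => fderiv ℝ w x) =ᶠ[nhds x]
            (fun _ => (0 : EuclideanSpace ℝ (Fin N) →L[ℝ] EuclideanSpace ℝ (Fin N))) :=
          Filter.eventually_of_mem (hScl.isOpen_compl.mem_nhds hxS) (fun y hy => hwfd0 y hy)
        exact (continuousAt_const).congr h1.symm
    -- integration by parts, coordinatewise
    have hcomp : ∀ (i : Fin N) (x : EuclideanSpace ℝ (Fin N)), fderiv ℝ (fun y => w y i) x
        = (EuclideanSpace.proj (𝕜 := ℝ) i).comp (fderiv ℝ w x) := fun i x =>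
      ((EuclideanSpace.proj (𝕜 := ℝ) i).hasFDerivAt.comp x (hwdiff x).hasFDerivAt).fderiv
    have hibp : ∀ i : Fin N,
        Integrable (fun x => fderiv ℝ (fun y => w y i) x (EuclideanSpace.single i 1)) volume ∧
        ∫ x, fderiv ℝ (fun y => w y i) x (EuclideanSpace.single i 1) = 0 := by
      intro i
      have hgidiff : Differentiable ℝ (fun y => w y i) := fun x =>
        ((EuclideanSpace.proj (𝕜 := ℝ) i).differentiableAt).comp x (hwdiff x)
      have hgicont : Continuous (fun y => w y i) :=
        ((EuclideanSpace.proj (𝕜 := ℝ) i).continuous).comp hwcont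
      have hgisupp : HasCompactSupport (fun y => w y i) :=
        HasCompactSupport.intro hScomp (fun y hy => by rw [hw0 y hy]; rfl)
      have hgiint : Integrable (fun y => w y i) volume :=
        hgicont.integrable_of_hasCompactSupport hgisupp
      have heq : (fun x => fderiv ℝ (fun y => w y i) x (EuclideanSpace.single i 1))
          = fun x => (fderiv ℝ w x (EuclideanSpace.single i 1)) i := by
        funext x; rw [hcomp i x]; rfl
      have hgi'cont : Continuous
          (fun x => fderiv ℝ (fun y => w y i) x (EuclideanSpace.single i 1)) := by
        rw [heq]
        exact ((EuclideanSpace.proj (𝕜 := ℝ) i).continuous).comp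
          (((ContinuousLinearMap.apply ℝ (EuclideanSpace ℝ (Fin N))
            (EuclideanSpace.single i 1)).continuous).comp hfdwcont)
      have hgi'supp : HasCompactSupport
          (fun x => fderiv ℝ (fun y => w y i) x (EuclideanSpace.single i 1)) := by
        refine HasCompactSupport.intro hScomp (fun y hy => ?_)
        rw [hcomp i y, hwfd0 y hy]; rfl
      have hgi'int : Integrable
          (fun x => fderiv ℝ (fun y => w y i) x (EuclideanSpace.single i 1)) volume :=
        hgi'cont.integrable_of_hasCompactSupport hgi'supp
      refine ⟨hgi'int, ?_⟩
      have h0 : (fun x : EuclideanSpace ℝ (Fin N) =>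
          fderiv ℝ (fun _ => (1:ℝ)) x (EuclideanSpace.single i 1) * w x i) = fun _ => 0 := by
        funext x; simp
      have hIBP := integral_mul_fderiv_eq_neg_fderiv_mul_of_integrable
        (μ := volume) (f := fun _ => (1:ℝ)) (g := fun y => w y i)
        (v := EuclideanSpace.single i 1)
        (by rw [h0]; exact integrable_zero _ _ _)
        (by simpa using hgi'int)
        (by simpa using hgiint)
        (fun x _ => differentiableAt_const 1) (fun x _ => hgidiff x)
      rw [h0] at hIBP
      simpa using hIBP
    -- the divergence of w integrates to zero
    have hvdivw0 : ∀ x ∉ S, vdiv w x = 0 := by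
      intro x hx
      unfold vdiv
      rw [hwfd0 x hx]
      simp
    have hsplit : (fun x => vdiv w x)
        = fun x => ∑ i, fderiv ℝ (fun y => w y i) x (EuclideanSpace.single i 1) := by
      funext x
      unfold vdiv
      refine Finset.sum_congr rfl (fun i _ => ?_)
      rw [hcomp i x]; rfl
    have hzero : ∫ x, vdiv w x = 0 := by
      rw [hsplit, integral_finset_sum _ (fun i _ => (hibp i).1)]
      exact Finset.sum_eq_zero (fun i _ => (hibp i).2)
    have hzeroΩ : ∫ x in Ω, vdiv w x = 0 := by
      rw [MeasureTheory.setIntegral_eq_integral_of_forall_compl_eq_zero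
        (fun x hx => hvdivw0 x (fun hS => hx (hSΩ hS)))]
      exact hzero
    -- pointwise identity for the divergence
    have hnormsq : ∀ v : EuclideanSpace ℝ (Fin N), ‖v‖^2 = ∑ i, (v i)^2 := by
      intro v
      rw [EuclideanSpace.norm_eq, Real.sq_sqrt (by positivity)]
      simp [sq_abs]
    have hident : ∀ x ∈ Ω, vdiv w x
        = psi l ε (u x) * vdiv F x + psid l ε (u x) * (a x (u x) * ‖Du x‖^2) := by
      intro x hx
      have hud : DifferentiableAt ℝ u x := (hgrad x hx).differentiableAt
      have hFd : DifferentiableAt ℝ F x :=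
        (hFC1.differentiableOn (by norm_num)).differentiableAt (hΩ.mem_nhds hx)
      have hfu : fderiv ℝ u x
          = (InnerProductSpace.toDual ℝ (EuclideanSpace ℝ (Fin N))) (Du x) :=
        (hasGradientAt_iff_hasFDerivAt.1 (hgrad x hx)).fderiv
      have hcd : HasFDerivAt (fun y => psi l ε (u y)) (psid l ε (u x) • fderiv ℝ u x) x :=
        (hder (u x)).comp_hasFDerivAt x hud.hasFDerivAt
      have hGfd : fderiv ℝ G x = psi l ε (u x) • fderiv ℝ F x
          + (fderiv ℝ (fun y => psi l ε (u y)) x).smulRight (F x) :=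
        fderiv_smul hcd.differentiableAt hFd
      have hcfd : fderiv ℝ (fun y => psi l ε (u y)) x = psid l ε (u x) • fderiv ℝ u x :=
        hcd.fderiv
      have htd : ∀ i : Fin N, (InnerProductSpace.toDual ℝ (EuclideanSpace ℝ (Fin N)))
          (Du x) (EuclideanSpace.single i 1) = Du x i := by
        intro i
        rw [InnerProductSpace.toDual_apply_apply, EuclideanSpace.inner_single_right]
        simp
      have happ : ∀ i : Fin N, (fderiv ℝ w x) (EuclideanSpace.single i 1) i
          = psi l ε (u x) * ((fderiv ℝ F x) (EuclideanSpace.single i 1) i)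
            + psid l ε (u x) * Du x i * (a x (u x) * Du x i) := by
        intro i
        rw [hwfd_eq x hx, hGfd]
        simp only [ContinuousLinearMap.add_apply, ContinuousLinearMap.smul_apply,
          ContinuousLinearMap.smulRight_apply, hcfd, hfu, PiLp.add_apply, PiLp.smul_apply,
          smul_eq_mul, htd i, hFdef]
        try ring
      unfold vdiv
      calc ∑ i, (fderiv ℝ w x) (EuclideanSpace.single i 1) i
          = ∑ i, (psi l ε (u x) * ((fderiv ℝ F x) (EuclideanSpace.single i 1) i)
            + psid l ε (u x) * Du x i * (a x (u x) * Du x i)) :=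
            Finset.sum_congr rfl (fun i _ => happ i)
        _ = psi l ε (u x) * (∑ i, (fderiv ℝ F x) (EuclideanSpace.single i 1) i)
            + psid l ε (u x) * (a x (u x) * ∑ i, (Du x i)^2) := by
            rw [Finset.sum_add_distrib, ← Finset.mul_sum]
            congr 1
            rw [Finset.mul_sum, Finset.mul_sum]
            exact Finset.sum_congr rfl (fun i _ => by ring)
        _ = psi l ε (u x) * ∑ i, (fderiv ℝ F x) (EuclideanSpace.single i 1) i
            + psid l ε (u x) * (a x (u x) * ‖Du x‖^2) := by
            rw [hnormsq (Du x)]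
    -- continuity / boundedness data
    have haucont : ContinuousOn (fun y => a y (u y)) Ω := haC1.continuousOn
    have hψucont : ContinuousOn (fun y => psi l ε (u y)) Ω :=
      hψC1.continuous.comp_continuousOn (hucl.mono subset_closure)
    have hψducont : ContinuousOn (fun y => psid l ε (u y)) Ω :=
      (psid_continuous l ε).comp_continuousOn (hucl.mono subset_closure)
    obtain ⟨sψ, hsψ⟩ : ∃ B, ∀ s : ℝ, |s| ≤ M → |psid l ε s| ≤ B := by
      obtain ⟨s0, -, hs0⟩ := (isCompact_Icc (a := -M) (b := M)).exists_isMaxOn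
        (Set.nonempty_Icc.2 (by linarith)) ((psid_continuous l ε).abs.continuousOn)
      exact ⟨|psid l ε s0|, fun s hs => hs0 (Set.mem_Icc.2 (abs_le.1 hs))⟩
    obtain ⟨sa, hsa⟩ : ∃ B, ∀ x ∈ closure Ω, ∀ s : ℝ, |s| ≤ M → |a x s| ≤ B := by
      obtain ⟨p0, -, hp0⟩ := (hK.prod (isCompact_Icc (a := -M) (b := M))).exists_isMaxOn
        (hKne.prod (Set.nonempty_Icc.2 (by linarith)))
        ((hasm.continuous.abs).continuousOn)
      exact ⟨|a p0.1 p0.2|, fun x hx s hs =>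
        hp0 (Set.mk_mem_prod hx (Set.mem_Icc.2 (abs_le.1 hs)))⟩
    set P := fun x => psid l ε (u x) * (a x (u x) * ‖Du x‖^2) with hPdef
    have hPaesm : AEStronglyMeasurable P (volume.restrict Ω) :=
      (hψducont.mul (haucont.mul hDusq_cont)).aestronglyMeasurable hmuΩ
    have hPint : Integrable P (volume.restrict Ω) := by
      refine Integrable.mono' (integrable_const (sψ * (sa * Dm^2))) hPaesm ?_
      filter_upwards [ae_restrict_mem hmuΩ] with x hx
      have h1 := hsψ (u x) (hub x (subset_closure hx))
      have h2 := hsa x (subset_closure hx) (u x) (hub x (subset_closure hx))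
      have h3 := hDm x (subset_closure hx)
      have h4 : ‖Du x‖^2 ≤ Dm^2 := by nlinarith [norm_nonneg (Du x)]
      rw [Real.norm_eq_abs]
      calc |P x| = |psid l ε (u x)| * (|a x (u x)| * ‖Du x‖^2) := by
            rw [hPdef, abs_mul, abs_mul, abs_of_nonneg (by positivity : (0:ℝ) ≤ ‖Du x‖^2)]
        _ ≤ sψ * (sa * Dm^2) := by
            refine mul_le_mul h1 (mul_le_mul h2 h4 (by positivity)
              (le_trans (abs_nonneg _) h2)) (by positivity) (le_trans (abs_nonneg _) h1)
    have hfdFcont : ContinuousOn (fun x => fderiv ℝ F x) Ω :=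
      hFC1.continuousOn_fderiv_of_isOpen hΩ le_rfl
    have hvdivFcont : ContinuousOn (fun x => vdiv F x) Ω := by
      unfold vdiv
      refine continuousOn_finset_sum _ (fun i _ => ?_)
      exact ((EuclideanSpace.proj (𝕜 := ℝ) i).continuous).comp_continuousOn
        (((ContinuousLinearMap.apply ℝ (EuclideanSpace ℝ (Fin N))
          (EuclideanSpace.single i 1)).continuous).comp_continuousOn hfdFcont)
    obtain ⟨vF, hvF0, hvF⟩ : ∃ B, 0 ≤ B ∧ ∀ x ∈ S, |vdiv F x| ≤ B := by
      rcases S.eq_empty_or_nonempty with hSe | hSne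
      · exact ⟨0, le_rfl, fun x hx => absurd hx (by rw [hSe]; exact Set.notMem_empty x)⟩
      · obtain ⟨x0, -, hx0⟩ := hScomp.exists_isMaxOn hSne ((hvdivFcont.mono hSΩ).abs)
        exact ⟨|vdiv F x0|, abs_nonneg _, fun x hx => hx0 hx⟩
    set Q := fun x => psi l ε (u x) * vdiv F x with hQdef
    have hQaesm : AEStronglyMeasurable Q (volume.restrict Ω) :=
      (hψucont.mul hvdivFcont).aestronglyMeasurable hmuΩ
    have hψbound : ∀ x ∈ closure Ω, |psi l ε (u x)| ≤ smax := by
      intro x hx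
      calc |psi l ε (u x)| ≤ Real.sinh (l * |u x|)/l := abs_psi_le hl0 (u x)
        _ ≤ Real.sinh (l*M)/l := by
            refine (div_le_div_iff_of_pos_right hl0).2 (Real.sinh_le_sinh.2 ?_)
            exact mul_le_mul_of_nonneg_left (hub x hx) hl0.le
    have hQbdd : ∀ x ∈ Ω, |Q x| ≤ smax * vF := by
      intro x hx
      by_cases hxS : x ∈ S
      · rw [hQdef, abs_mul]
        exact mul_le_mul (hψbound x (subset_closure hx)) (hvF x hxS) (abs_nonneg _) hsmax0
      · have hxε : ¬ ε ≤ |u x| := fun h => hxS ⟨subset_closure hx, h⟩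
        have hψz : psi l ε (u x) = 0 :=
          psi_eq_zero (by nlinarith [abs_nonneg (u x), sq_abs (u x)])
        rw [hQdef]
        simp only [hψz, zero_mul, abs_zero]
        positivity
    have hQint : Integrable Q (volume.restrict Ω) := by
      refine Integrable.mono' (integrable_const (smax * vF)) hQaesm ?_
      filter_upwards [ae_restrict_mem hmuΩ] with x hx
      rw [Real.norm_eq_abs]
      exact hQbdd x hx
    -- the identity integral
    have hQP : (∫ x in Ω, Q x) + (∫ x in Ω, P x) = 0 := by
      have h1 : ∫ x in Ω, vdiv w x = ∫ x in Ω, (Q x + P x) :=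
        setIntegral_congr_fun hmuΩ (fun x hx => hident x hx)
      calc (∫ x in Ω, Q x) + (∫ x in Ω, P x) = ∫ x in Ω, (Q x + P x) :=
            (integral_add hQint hPint).symm
        _ = ∫ x in Ω, vdiv w x := h1.symm
        _ = 0 := hzeroΩ
    set R1 := fun x => |psi l ε (u x)| * a₂ x with hR1def
    set R2 := fun x => b₂ * (|psi l ε (u x)| * ‖Du x‖^2) with hR2def
    have ha₂aesm : AEStronglyMeasurable a₂ (volume.restrict Ω) := ha₂int.aestronglyMeasurable
    have hR1aesm : AEStronglyMeasurable R1 (volume.restrict Ω) :=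
      ((hψucont.abs).aestronglyMeasurable hmuΩ).mul ha₂aesm
    have hR1int : Integrable R1 (volume.restrict Ω) := by
      refine Integrable.mono' (ha₂int.const_mul smax) hR1aesm ?_
      filter_upwards [ae_restrict_mem hmuΩ] with x hx
      rw [Real.norm_eq_abs, hR1def, abs_mul, abs_abs, abs_of_nonneg (ha₂pos x)]
      exact mul_le_mul_of_nonneg_right (hψbound x (subset_closure hx)) (ha₂pos x)
    have hR2aesm : AEStronglyMeasurable R2 (volume.restrict Ω) :=
      (((hψucont.abs).mul hDusq_cont).aestronglyMeasurable hmuΩ).const_mul b₂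
    have hR2int : Integrable R2 (volume.restrict Ω) := by
      refine Integrable.mono' (integrable_const (b₂ * (smax * Dm^2))) hR2aesm ?_
      filter_upwards [ae_restrict_mem hmuΩ] with x hx
      have h3 := hDm x (subset_closure hx)
      have h4 : ‖Du x‖^2 ≤ Dm^2 := by nlinarith [norm_nonneg (Du x)]
      have h5 := hψbound x (subset_closure hx)
      rw [Real.norm_eq_abs, hR2def, abs_mul, abs_of_nonneg hb₂, abs_mul, abs_abs,
        abs_of_nonneg (by positivity : (0:ℝ) ≤ ‖Du x‖^2)]
      refine mul_le_mul_of_nonneg_left ?_ hb₂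
      exact mul_le_mul h5 h4 (by positivity) hsmax0
    have hQle : - (∫ x in Ω, Q x) ≤ (∫ x in Ω, R1 x) + (∫ x in Ω, R2 x) := by
      rw [← integral_add hR1int hR2int, ← integral_neg]
      refine integral_mono_ae hQint.neg (hR1int.add hR2int) ?_
      filter_upwards [hae, ae_restrict_mem hmuΩ] with x hbx hxΩ
      have h3 := mul_le_mul_of_nonneg_left hbx (abs_nonneg (psi l ε (u x)))
      calc -Q x ≤ |Q x| := neg_le_abs _
        _ = |psi l ε (u x)| * |vdiv F x| := by rw [hQdef, abs_mul]
        _ ≤ |psi l ε (u x)| * (a₂ x + b₂ * ‖Du x‖^2) := h3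
        _ = R1 x + R2 x := by rw [hR1def, hR2def]; ring
    have hR1le : ∫ x in Ω, R1 x ≤ smax * A₂ := by
      rw [hA₂def, ← integral_const_mul]
      refine integral_mono_ae hR1int (ha₂int.const_mul smax) ?_
      filter_upwards [ae_restrict_mem hmuΩ] with x hx
      rw [hR1def]
      exact mul_le_mul_of_nonneg_right (hψbound x (subset_closure hx)) (ha₂pos x)
    -- key pointwise inequality
    have hTm : MeasurableSet {y | y ∈ Ω ∧ 2*ε^2 < (u y)^2} := by
      have heq : {y | y ∈ Ω ∧ 2*ε^2 < (u y)^2}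
          = Ω ∩ (fun y => (u y)^2) ⁻¹' Set.Ioi (2*ε^2) := by
        ext y; simp [Set.mem_setOf_eq]
      rw [heq]
      exact ((((hucl.mono subset_closure)).pow 2).isOpen_inter_preimage hΩ
        isOpen_Ioi).measurableSet
    have hindint : Integrable
        (({y | y ∈ Ω ∧ 2*ε^2 < (u y)^2}).indicator (fun y => ‖Du y‖^2))
        (volume.restrict Ω) := hDusq_int.indicator hTm
    have hkeypt : ∀ x ∈ Ω,
        (1/2) * ({y | y ∈ Ω ∧ 2*ε^2 < (u y)^2}).indicator (fun y => ‖Du y‖^2) x + R2 x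
          ≤ P x := by
      intro x hx
      have hk := key_lower (l := l) (ε := ε) (b₂ := b₂) (A := a x (u x)) (s := u x)
        hl0 hε.ne' hb₂ (by rw [hldef]; linarith) (hage1 x (subset_closure hx) (u x))
      have hD2 : (0:ℝ) ≤ ‖Du x‖^2 := by positivity
      have hk2 := mul_le_mul_of_nonneg_right hk hD2
      have hχ0 : 0 ≤ Real.smoothTransition (((u x)^2 - ε^2)/ε^2) :=
        Real.smoothTransition.nonneg _
      by_cases hmem : x ∈ {y | y ∈ Ω ∧ 2*ε^2 < (u y)^2}
      · have hind : ({y | y ∈ Ω ∧ 2*ε^2 < (u y)^2}).indicator (fun y => ‖Du y‖^2) x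
            = ‖Du x‖^2 := Set.indicator_of_mem hmem _
        have hχ1 : Real.smoothTransition (((u x)^2 - ε^2)/ε^2) = 1 :=
          trans_one hε.ne' (le_of_lt hmem.2)
        rw [hind, hPdef, hR2def]
        rw [hχ1] at hk2
        nlinarith [hk2]
      · have hind : ({y | y ∈ Ω ∧ 2*ε^2 < (u y)^2}).indicator (fun y => ‖Du y‖^2) x
            = 0 := Set.indicator_of_notMem hmem _
        rw [hind, hPdef, hR2def]
        nlinarith [hk2, mul_nonneg (mul_nonneg (by norm_num : (0:ℝ) ≤ 1/2) hχ0) hD2]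
    have hmain : ∫ x in Ω,
        ((1/2) * ({y | y ∈ Ω ∧ 2*ε^2 < (u y)^2}).indicator (fun y => ‖Du y‖^2) x + R2 x)
          ≤ ∫ x in Ω, P x := by
      refine integral_mono_ae ((hindint.const_mul _).add hR2int) hPint ?_
      filter_upwards [ae_restrict_mem hmuΩ] with x hx using hkeypt x hx
    rw [integral_add (hindint.const_mul _) hR2int, integral_const_mul] at hmain
    linarith [hQP, hQle, hR1le, hmain]


  -- gradient vanishes a.e. on the zero set
  have hgz : ∀ᵐ x ∂(volume.restrict Ω), u x = 0 → Du x = 0 :=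
    grad_ae_zero hΩ hgrad (hucl.mono subset_closure)
  -- monotone convergence
  have husq_cont : ContinuousOn (fun y => (u y)^2) Ω := ((hucl.mono subset_closure)).pow 2
  have hTmeas : ∀ n : ℕ, MeasurableSet {y | y ∈ Ω ∧ 2*(1/((n:ℝ)+1))^2 < (u y)^2} := by
    intro n
    have : {y | y ∈ Ω ∧ 2*(1/((n:ℝ)+1))^2 < (u y)^2}
        = Ω ∩ (fun y => (u y)^2) ⁻¹' Set.Ioi (2*(1/((n:ℝ)+1))^2) := by
      ext y; simp [Set.mem_setOf_eq, Set.mem_preimage, Set.mem_Ioi]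
    rw [this]
    exact (husq_cont.isOpen_inter_preimage hΩ isOpen_Ioi).measurableSet
  set f : ℕ → EuclideanSpace ℝ (Fin N) → ℝ :=
    fun n => ({y | y ∈ Ω ∧ 2*(1/((n:ℝ)+1))^2 < (u y)^2}).indicator (fun y => ‖Du y‖^2)
    with hfdef
  have hfint : ∀ n, Integrable (f n) (volume.restrict Ω) :=
    fun n => hDusq_int.indicator (hTmeas n)
  have hmono : ∀ᵐ x ∂(volume.restrict Ω), Monotone fun n => f n x := by
    refine Filter.Eventually.of_forall (fun x => ?_)
    intro m n hmn
    refine Set.indicator_le_indicator_of_subset ?_ (fun y => by positivity) x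
    intro y hy
    refine ⟨hy.1, lt_of_le_of_lt ?_ hy.2⟩
    have hcast : (m:ℝ) ≤ (n:ℝ) := Nat.cast_le.2 hmn
    have h1 : 1/((n:ℝ)+1) ≤ 1/((m:ℝ)+1) :=
      one_div_le_one_div_of_le (by positivity) (by linarith)
    nlinarith [one_div_pos.2 (by positivity : (0:ℝ) < (n:ℝ)+1), one_div_pos.2 (by positivity : (0:ℝ) < (m:ℝ)+1)]
  have htend : ∀ᵐ x ∂(volume.restrict Ω),
      Filter.Tendsto (fun n => f n x) Filter.atTop (nhds (‖Du x‖^2)) := by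
    filter_upwards [hgz, ae_restrict_mem hmuΩ] with x hx hxΩ
    by_cases hux : u x = 0
    · have hDux : Du x = 0 := hx hux
      have hfn0 : ∀ n, f n x = 0 := by
        intro n
        refine Set.indicator_of_notMem (fun hmem => ?_) _
        have := hmem.2
        rw [hux] at this
        nlinarith [one_div_pos.2 (by positivity : (0:ℝ) < (n:ℝ)+1)]
      rw [hDux]
      simp only [hfn0, norm_zero]
      norm_num
    · have h0 : 0 < |u x| := abs_pos.2 hux
      obtain ⟨n₀, hn₀⟩ := exists_nat_one_div_lt (show (0:ℝ) < |u x|/2 by positivity)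
      apply tendsto_atTop_of_eventually_const (i₀ := n₀)
      intro n hn
      have hcast : (n₀:ℝ) ≤ (n:ℝ) := Nat.cast_le.2 hn
      have h1 : 1/((n:ℝ)+1) ≤ 1/((n₀:ℝ)+1) :=
        one_div_le_one_div_of_le (by positivity) (by linarith)
      have h2 : 2*(1/((n:ℝ)+1))^2 < (u x)^2 := by
        have hs := sq_abs (u x)
        have hpos : 0 < 1/((n:ℝ)+1) := one_div_pos.2 (by positivity)
        nlinarith
      exact Set.indicator_of_mem (Set.mem_setOf_eq ▸ ⟨hxΩ, h2⟩) _
  have hlim := integral_tendsto_of_tendsto_of_monotone hfint hDusq_int hmono htend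
  have hbound : ∀ n : ℕ, ∫ x in Ω, f n x ≤ 2*smax*A₂ := by
    intro n
    exact hεest (1/((n:ℝ)+1)) (by positivity)
  have hfinal : ∫ x in Ω, ‖Du x‖^2 ≤ 2*smax*A₂ := le_of_tendsto' hlim hbound
  linarith
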